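/- Let m ≤ n be positive integers, let λ₁ < λ₂ < ⋯ < λ_{m+1} be elements of Γˣ where λ_{m+1} = ∞ is also allowed, let n ≥ d₀ ≥ d₁ ≥ ⋯ ≥ d_m ≥ 0 be integers, and let W_{i,j} ⊆ Kⁿ for 0 ≤ i ≤ j ≤ m be K-subspaces satisfying: (i) dim W_{i,j} = d_j; (ii) W_{i,j} ⊆ W_{i,i}; (iii) for i < j, Δ(W_{i+1,j}, W_{i,j}) ≤ λ_{i+1}/λ_{j+1}, where in the case λ_{j+1} = ∞ the condition is interpreted as W_{i+1,j} = W_{i,j}. Then there exist K-subspaces V_{i,j} ⊆ Kⁿ for 0 ≤ i ≤ j ≤ m satisfying the same conditions (i)–(iii), such that V_{i,i} = W_{i,i} for all i, and moreover V_{i,j+1} ⊆ V_{i,j} for all 0 ≤ i ≤ j ≤ m−1. -/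

import Mathlib

/-!
Going up from `i = m` to `i = 0`, choose a basis `B i 0, …, B i (d i - 1)` of `W i i` in
valuative echelon form (each vector attains its max-norm at a pivot coordinate where all later
vectors are strictly smaller than their norms) with `B i k ∈ W i j` for the largest `j ≤ m` with
`k < d j`. An echelon family is orthogonal: `v(∑ c_k b_k) = max_k v(c_k) v(b_k)`.
Row `i` comes from row `i + 1` by approximating each `B (i+1) k ∈ W (i+1) j` inside `W i j` using
condition (iii); as `λ_{i+1} < λ_{j+1}` this is a small perturbation, which keeps the echelon
form, and the result is completed to an echelon basis of `W i i`.
Then `V i j`, the span of the first `d j` vectors of row `i`, is decreasing in `j`, and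
orthogonality turns the vectorwise estimates into `Δ(V (i+1) j, V i j) ≤ λ_{i+1}/λ_{j+1}`.
-/
noncomputable section

open scoped Classical Pointwise

section Preamble

variable {K : Type*} [Field K] {Γ : Type*} [LinearOrderedCommGroupWithZero Γ]

instance (priority := 100) : OrderBot Γ where
  bot := 0
  bot_le _ := zero_le'

/-- The max-valuation on `K^n`: `v(a) = maxᵢ v(aᵢ)`. -/
def vv (v : Valuation K Γ) {n : ℕ} (x : Fin n → K) : Γ :=
  Finset.univ.sup fun i => v (x i)

/-- `rvEq v x y` expresses `rv(x) = rv(y)` in `RV⁽ⁿ⁾ = Kⁿ/∼`, where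
`x ∼ y` iff `v(x−y) < v(x)` or `x = y = 0`. -/
def rvEq (v : Valuation K Γ) {n : ℕ} (x y : Fin n → K) : Prop :=
  vv v (x - y) < vv v x ∨ (x = 0 ∧ y = 0)

/-- Balls in `K` (with `K` itself counting as a ball). -/
def IsBall1 (v : Valuation K Γ) (B : Set K) : Prop :=
  B = Set.univ ∨ ∃ a : K, ∃ γ : Γ, γ ≠ 0 ∧
    (B = {x | v (x - a) < γ} ∨ B = {x | v (x - a) ≤ γ})

/-- Balls in `Kⁿ` (with `Kⁿ` itself counting as a ball). -/
def IsBall (v : Valuation K Γ) {n : ℕ} (B : Set (Fin n → K)) : Prop :=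
  B = Set.univ ∨ ∃ a : Fin n → K, ∃ γ : Γ, γ ≠ 0 ∧
    (B = {x | vv v (x - a) < γ} ∨ B = {x | vv v (x - a) ≤ γ})

/-- Spherical completeness: every nonempty chain of balls in `K` has nonempty
intersection. -/
def SphericallyComplete (v : Valuation K Γ) : Prop :=
  ∀ C : Set (Set K), C.Nonempty → (∀ B ∈ C, IsBall1 v B) → IsChain (· ⊆ ·) C →
    (⋂ B ∈ C, B).Nonempty

/-- The residue field `K̄` of the valuation ring `𝒪 = {x | v x ≤ 1}`. -/
def Kbar (v : Valuation K Γ) : Type _ :=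
  IsLocalRing.ResidueField v.valuationSubring

instance (v : Valuation K Γ) : Field (Kbar v) :=
  inferInstanceAs (Field (IsLocalRing.ResidueField v.valuationSubring))

/-- The residue map `res : 𝒪 → K̄`, extended by the junk value `0` outside `𝒪`. -/
def res' (v : Valuation K Γ) (x : K) : Kbar v :=
  if h : v x ≤ 1 then IsLocalRing.residue v.valuationSubring ⟨x, h⟩ else 0

/-- The coordinatewise residue map on `Kⁿ`. -/
def resv (v : Valuation K Γ) {n : ℕ} (x : Fin n → K) : Fin n → Kbar v :=
  fun i => res' v (x i)

/-- `res(S)` for a set `S ⊆ Kⁿ`: the set of residues of points of `S ∩ 𝒪ⁿ`. -/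
def resSet (v : Valuation K Γ) {n : ℕ} (S : Set (Fin n → K)) : Set (Fin n → Kbar v) :=
  resv v '' {x ∈ S | ∀ i, v (x i) ≤ 1}

/-- `dir(x) = res(K·x) ⊆ K̄ⁿ`. -/
def dirSet (v : Valuation K Γ) {n : ℕ} (x : Fin n → K) : Set (Fin n → Kbar v) :=
  resSet v {y | ∃ c : K, y = c • x}

/-- The coordinate projection `Kⁿ → K^d` selecting the coordinates `σ 0 < σ 1 < ⋯`. -/
def proj {A : Type*} {n d : ℕ} (σ : Fin d → Fin n) (x : Fin n → A) : Fin d → A :=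
  fun k => x (σ k)

/-- `σ` (a strictly increasing selection of `d` of the `n` coordinates) is an
exhibition of the `K̄`-subspace `Ū ⊆ K̄ⁿ` if the corresponding coordinate projection
`K̄ⁿ → K̄^d` restricts to an isomorphism from `Ū` onto `K̄^d`. -/
def IsExhibition (v : Valuation K Γ) {n d : ℕ} (σ : Fin d → Fin n)
    (Ubar : Submodule (Kbar v) (Fin n → Kbar v)) : Prop :=
  StrictMono σ ∧ Set.BijOn (proj σ) (Ubar : Set (Fin n → Kbar v)) Set.univ

/-- `affdir(C)`: the `K̄`-subspace of `K̄ⁿ` generated by all `dir(x − x')`, `x, x' ∈ C`. -/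
def affdir (v : Valuation K Γ) {n : ℕ} (C : Set (Fin n → K)) :
    Submodule (Kbar v) (Fin n → Kbar v) :=
  Submodule.span (Kbar v) (⋃ x ∈ C, ⋃ x' ∈ C, dirSet v (x - x'))

/-- A matrix has entries in the valuation ring `𝒪`. -/
def EntriesInO (v : Valuation K Γ) {n : ℕ} (M : Matrix (Fin n) (Fin n) K) : Prop :=
  ∀ i j, v (M i j) ≤ 1

/-- `M ∈ GLₙ(𝒪)`: `M` is invertible, with entries in `𝒪`, and its inverse also has
entries in `𝒪`. -/
def MemGLO (v : Valuation K Γ) {n : ℕ} (M : Matrix (Fin n) (Fin n) K) : Prop :=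
  EntriesInO v M ∧ ∃ N : Matrix (Fin n) (Fin n) K,
    M * N = 1 ∧ N * M = 1 ∧ EntriesInO v N

/-- The entrywise residue matrix of `M`. -/
def resM (v : Valuation K Γ) {n : ℕ} (M : Matrix (Fin n) (Fin n) K) :
    Matrix (Fin n) (Fin n) (Kbar v) :=
  fun i j => res' v (M i j)

/-- `DeltaLE v U W γ` expresses `Δ(U, W) ≤ γ`: for every `u ∈ U` there is `w ∈ W`
with `v(u − w) ≤ v(u)·γ`. -/
def DeltaLE (v : Valuation K Γ) {n : ℕ} (U W : Submodule K (Fin n → K)) (γ : Γ) : Prop :=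
  ∀ u ∈ U, ∃ w ∈ W, vv v (u - w) ≤ vv v u * γ

/-- `IsDelta v U W γ` expresses `Δ(U, W) = γ`: `γ` is the minimum of all admissible
bounds. -/
def IsDelta (v : Valuation K Γ) {n : ℕ} (U W : Submodule K (Fin n → K)) (γ : Γ) : Prop :=
  DeltaLE v U W γ ∧ ∀ δ : Γ, DeltaLE v U W δ → γ ≤ δ

end Preamble

variable {K : Type*} [Field K] {Γ : Type*} [LinearOrderedCommGroupWithZero Γ]

/-- Condition (iii) of Statement 2: `Δ(U, W) ≤ a/b`, where in the case `b = ∞`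
the condition is interpreted as `U = W`. -/
def CondIII (v : Valuation K Γ) {n : ℕ} (U W : Submodule K (Fin n → K))
    (a b : WithTop Γ) : Prop :=
  if b = ⊤ then U = W
  else ∃ a' b' : Γ, a = (a' : WithTop Γ) ∧ b = (b' : WithTop Γ) ∧ DeltaLE v U W (a' / b')

section MaxNorm

variable {v : Valuation K Γ} {n : ℕ}

lemma le_vv (x : Fin n → K) (i : Fin n) : v (x i) ≤ vv v x :=
  Finset.le_sup (f := fun i => v (x i)) (Finset.mem_univ i)

lemma vv_le_iff {x : Fin n → K} {γ : Γ} : vv v x ≤ γ ↔ ∀ i, v (x i) ≤ γ := by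
  simp [vv, Finset.sup_le_iff]

lemma vv_eq_zero_iff {x : Fin n → K} : vv v x = 0 ↔ x = 0 := by
  rw [← le_zero_iff, vv_le_iff, funext_iff]
  simp

@[simp] lemma vv_zero : vv v (0 : Fin n → K) = 0 :=
  vv_eq_zero_iff.mpr rfl

lemma exists_eq_vv {x : Fin n → K} (hx : x ≠ 0) : ∃ i, v (x i) = vv v x := by
  obtain ⟨i, -⟩ := Function.ne_iff.mp hx
  obtain ⟨j, -, hj⟩ := Finset.exists_mem_eq_sup Finset.univ ⟨i, Finset.mem_univ i⟩
    fun i => v (x i)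
  exact ⟨j, hj.symm⟩

lemma vv_smul (c : K) (x : Fin n → K) : vv v (c • x) = v c * vv v x := by
  refine le_antisymm (vv_le_iff.mpr fun i => ?_) ?_
  · simpa using mul_le_mul_right (le_vv (v := v) x i) (v c)
  · rcases eq_or_ne x 0 with rfl | hx
    · simp
    obtain ⟨i, hi⟩ := exists_eq_vv (v := v) hx
    simpa [← hi] using le_vv (v := v) (c • x) i

lemma vv_sum_le {ι : Type*} {s : Finset ι} {f : ι → Fin n → K} {γ : Γ}
    (hf : ∀ k ∈ s, vv v (f k) ≤ γ) : vv v (∑ k ∈ s, f k) ≤ γ :=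
  vv_le_iff.mpr fun i => by
    simpa only [Finset.sum_apply] using
      v.map_sum_le fun k hk => (le_vv (f k) i).trans (hf k hk)

lemma vv_eq_of_vv_sub_lt {x y : Fin n → K} (h : vv v (x - y) < vv v x) : vv v y = vv v x := by
  have hx : x ≠ 0 := by rintro rfl; simp at h
  obtain ⟨i, hi⟩ := exists_eq_vv (v := v) hx
  refine le_antisymm (vv_le_iff.mpr fun j => ?_) ?_
  · rw [show y j = x j - (x - y) j by simp]
    exact (v.map_sub _ _).trans (max_le (le_vv x j) ((le_vv _ j).trans h.le))
  · rw [← hi, ← v.map_eq_of_sub_lt (y := y i)]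
    · exact le_vv y i
    · rw [v.map_sub_swap, hi]
      exact (le_vv (x - y) i).trans_lt h

end MaxNorm

section Echelon

variable {v : Valuation K Γ} {n : ℕ}

variable (v) in
def IsEchelon (s : ℕ) (b : ℕ → Fin n → K) : Prop :=
  ∀ k < s, b k ≠ 0 ∧ ∃ q, v (b k q) = vv v (b k) ∧ ∀ l, k < l → l < s → v (b l q) < vv v (b l)

def prefixSpan (b : ℕ → Fin n → K) (t : ℕ) : Submodule K (Fin n → K) :=
  Submodule.span K (Set.range fun k : Fin t => b k)

lemma mem_prefixSpan_iff {b : ℕ → Fin n → K} {t : ℕ} {x : Fin n → K} :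
    x ∈ prefixSpan b t ↔ ∃ c : ℕ → K, ∑ k ∈ Finset.range t, c k • b k = x := by
  rw [prefixSpan, Submodule.mem_span_range_iff_exists_fun]
  constructor
  · rintro ⟨g, rfl⟩
    refine ⟨Function.extend Fin.val g 0, ?_⟩
    rw [← Fin.sum_univ_eq_sum_range (fun k => Function.extend Fin.val g 0 k • b k)]
    simp [Fin.val_injective.extend_apply]
  · rintro ⟨c, rfl⟩
    exact ⟨fun k => c k, Fin.sum_univ_eq_sum_range (fun k => c k • b k) t⟩

lemma prefixSpan_mono (b : ℕ → Fin n → K) {t t' : ℕ} (h : t ≤ t') :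
    prefixSpan b t ≤ prefixSpan b t' :=
  Submodule.span_mono <| Set.range_subset_iff.mpr fun k => ⟨Fin.castLE h k, rfl⟩

lemma prefixSpan_le {b : ℕ → Fin n → K} {t : ℕ} {U : Submodule K (Fin n → K)}
    (h : ∀ k < t, b k ∈ U) : prefixSpan b t ≤ U :=
  Submodule.span_le.mpr <| Set.range_subset_iff.mpr fun k => h k k.2

lemma isEchelon_zero (b : ℕ → Fin n → K) : IsEchelon v 0 b :=
  fun k hk => absurd hk k.not_lt_zero

namespace IsEchelon

variable {s : ℕ} {b : ℕ → Fin n → K}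

lemma mono (h : IsEchelon v s b) {t : ℕ} (hts : t ≤ s) : IsEchelon v t b := fun k hk =>
  have ⟨hb0, q, hq, hlater⟩ := h k (hk.trans_le hts)
  ⟨hb0, q, hq, fun l hkl hl => hlater l hkl (hl.trans_le hts)⟩

/-- The pivot of the first index `k₀` where the maximum is attained sees exactly that maximum:
earlier terms are strictly smaller by the choice of `k₀`, later ones by the pivot property. -/
lemma vv_sum (h : IsEchelon v s b) (c : ℕ → K) :
    vv v (∑ k ∈ Finset.range s, c k • b k)
      = (Finset.range s).sup fun k => v (c k) * vv v (b k) := by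
  set μ := (Finset.range s).sup fun k => v (c k) * vv v (b k)
  have hle : ∀ k ∈ Finset.range s, v (c k) * vv v (b k) ≤ μ := fun k hk =>
    Finset.le_sup (f := fun k => v (c k) * vv v (b k)) hk
  refine le_antisymm (vv_sum_le fun k hk => (vv_smul (c k) (b k)).trans_le (hle k hk)) ?_
  rcases eq_or_ne μ 0 with hμ | hμ
  · rw [hμ]
    exact zero_le
  have hex : ∃ k, k < s ∧ v (c k) * vv v (b k) = μ := by
    rcases (Finset.range s).eq_empty_or_nonempty with he | hne
    · exact absurd (by simp only [μ, he, Finset.sup_empty]; exact bot_eq_zero) hμ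
    obtain ⟨k, hk, hkμ⟩ := Finset.exists_mem_eq_sup _ hne fun k => v (c k) * vv v (b k)
    exact ⟨k, Finset.mem_range.mp hk, hkμ.symm⟩
  classical
  obtain ⟨hk₀s, hk₀μ⟩ := Nat.find_spec hex
  obtain ⟨-, q, hq, hlater⟩ := h _ hk₀s
  suffices v ((∑ k ∈ Finset.range s, c k • b k) q) = μ from this ▸ le_vv _ q
  simp only [Finset.sum_apply, Pi.smul_apply, smul_eq_mul]
  have hhead : v (c (Nat.find hex) * b (Nat.find hex) q) = μ := by rw [map_mul, hq, hk₀μ]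
  rw [← hhead]
  refine v.map_sum_eq_of_lt (Finset.mem_range.mpr hk₀s) fun k hk => ?_
  rw [hhead]
  obtain ⟨hks, hne⟩ : k < s ∧ k ≠ Nat.find hex := by simpa using hk
  have hkμ := hle k (Finset.mem_range.mpr hks)
  rw [map_mul]
  rcases hne.lt_or_gt with hlt | hgt
  · exact (mul_le_mul_right (le_vv _ q) _).trans_lt
      (hkμ.lt_of_ne fun he => Nat.find_min hex hlt ⟨hks, he⟩)
  · rcases eq_or_ne (v (c k)) 0 with hc | hc
    · rw [hc, zero_mul]
      exact zero_lt_iff.mpr hμ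
    · exact (mul_lt_mul_of_pos_left (hlater k hgt hks) (zero_lt_iff.mpr hc)).trans_le hkμ

lemma linearIndependent (h : IsEchelon v s b) : LinearIndependent K fun k : Fin s => b k := by
  rw [Fintype.linearIndependent_iff]
  intro g hg k
  set c : ℕ → K := Function.extend Fin.val g 0
  have hc : ∀ k : Fin s, c k = g k := fun k => Fin.val_injective.extend_apply g 0 k
  have hsum : ∑ k ∈ Finset.range s, c k • b k = 0 := by
    rw [← Fin.sum_univ_eq_sum_range (fun k => c k • b k)]
    simpa only [hc] using hg
  have hk := Finset.le_sup (f := fun k => v (c k) * vv v (b k)) (Finset.mem_range.mpr k.2)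
  rw [← h.vv_sum, hsum, vv_zero, le_zero_iff, mul_eq_zero, hc,
    vv_eq_zero_iff] at hk
  exact v.zero_iff.mp (hk.resolve_right (h k k.2).1)

lemma finrank_prefixSpan (h : IsEchelon v s b) : Module.finrank K (prefixSpan b s) = s := by
  rw [prefixSpan, finrank_span_eq_card h.linearIndependent, Fintype.card_fin]

lemma of_vv_sub_lt (h : IsEchelon v s b) {b' : ℕ → Fin n → K}
    (hb' : ∀ k < s, vv v (b k - b' k) < vv v (b k)) : IsEchelon v s b' := by
  have hnorm : ∀ k < s, vv v (b' k) = vv v (b k) := fun k hk => vv_eq_of_vv_sub_lt (hb' k hk)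
  have hsmall : ∀ k < s, ∀ q, v ((b k - b' k) q) < vv v (b k) := fun k hk q =>
    (le_vv _ q).trans_lt (hb' k hk)
  intro k hk
  obtain ⟨hb0, q, hq, hlater⟩ := h k hk
  refine ⟨fun h0 => hb0 ?_, q, ?_, fun l hkl hl => ?_⟩
  · rw [← vv_eq_zero_iff (v := v), ← hnorm k hk, h0, vv_eq_zero_iff]
  · rw [hnorm k hk, ← hq]
    refine v.map_eq_of_sub_lt ?_
    rw [v.map_sub_swap, hq]
    simpa using hsmall k hk q
  · rw [hnorm l hl, show b' l q = b l q - (b l - b' l) q by simp]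
    exact (v.map_sub _ _).trans_lt (max_lt (hlater l hkl hl) (hsmall l hl q))

/-- A nonzero vector of `U` vanishing at all pivots of `b` (it exists by rank–nullity) can be
appended to `b`. -/
lemma exists_update (h : IsEchelon v s b) {U : Submodule K (Fin n → K)}
    (hs : s < Module.finrank K U) : ∃ x ∈ U, IsEchelon v (s + 1) (Function.update b s x) := by
  choose hb0 p hp hlater using h
  let π : U →ₗ[K] (Fin s → K) :=
    (LinearMap.pi fun k : Fin s => LinearMap.proj (p k k.2)) ∘ₗ U.subtype
  obtain ⟨⟨x, hxU⟩, hxker, hx0⟩ := Submodule.exists_mem_ne_zero_of_ne_bot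
    (LinearMap.ker_ne_bot_of_finrank_lt (f := π) (by simpa using hs))
  have hx : x ≠ 0 := fun h0 => hx0 (by simp [h0])
  have hxp : ∀ k (hk : k < s), x (p k hk) = 0 := fun k hk => congrFun hxker ⟨k, hk⟩
  obtain ⟨q, hq⟩ := exists_eq_vv (v := v) hx
  refine ⟨x, hxU, fun k hk => ?_⟩
  rcases Nat.lt_succ_iff_lt_or_eq.mp hk with hk | rfl
  · rw [Function.update_of_ne hk.ne]
    refine ⟨hb0 k hk, p k hk, hp k hk, fun l hkl hl => ?_⟩
    rcases Nat.lt_succ_iff_lt_or_eq.mp hl with hl | rfl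
    · rw [Function.update_of_ne hl.ne]
      exact hlater k hk l hkl hl
    · rw [Function.update_self, hxp k hk, map_zero]
      exact zero_lt_iff.mpr (vv_eq_zero_iff.not.mpr hx)
  · rw [Function.update_self]
    exact ⟨hx, q, hq, fun l hkl hl => absurd hl (by omega)⟩

lemma exists_extend (h : IsEchelon v s b) {U : Submodule K (Fin n → K)}
    (hbU : ∀ k < s, b k ∈ U) (hs : s ≤ Module.finrank K U) :
    ∃ b', IsEchelon v (Module.finrank K U) b' ∧ (∀ k < Module.finrank K U, b' k ∈ U) ∧
      ∀ k < s, b' k = b k := by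
  obtain ⟨t, ht⟩ := Nat.exists_eq_add_of_le hs
  induction t generalizing s b with
  | zero => exact ⟨b, ht ▸ h, ht ▸ hbU, fun _ _ => rfl⟩
  | succ t ih =>
    obtain ⟨x, hxU, hx⟩ := h.exists_update (U := U) (by omega)
    have hxU' : ∀ k < s + 1, Function.update b s x k ∈ U := fun k hk => by
      rcases Nat.lt_succ_iff_lt_or_eq.mp hk with hk | rfl
      · simpa [Function.update_of_ne hk.ne] using hbU k hk
      · simpa using hxU
    obtain ⟨b', hb', hb'U, hb'b⟩ := ih hx hxU' (by omega) (by omega)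
    exact ⟨b', hb', hb'U, fun k hk =>
      (hb'b k (by omega)).trans (Function.update_of_ne hk.ne _ _)⟩

end IsEchelon

end Echelon

/-- `a / b` with the convention `a / ∞ = 0`, so that `Δ(U, W) ≤ divTop a b` with `b = ∞` means
`U ⊆ W`. -/
def divTop (a b : WithTop Γ) : Γ :=
  a.untopD 0 / b.untopD 0

lemma divTop_lt_one {a b : WithTop Γ} (h : a < b) : divTop a b < 1 := by
  induction b using WithTop.recTopCoe with
  | top => simp [divTop]
  | coe b =>
    lift a to Γ using h.ne_top
    have hab : a < b := WithTop.coe_lt_coe.mp h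
    simpa [divTop, div_lt_one₀ (zero_le.trans_lt hab)] using hab

lemma divTop_le_divTop {a b c : WithTop Γ} (hab : a < b) (hbc : b ≤ c) :
    divTop a c ≤ divTop a b := by
  induction c using WithTop.recTopCoe with
  | top => simp [divTop]
  | coe c =>
    lift b to Γ using (hbc.trans_lt (WithTop.coe_lt_top c)).ne
    lift a to Γ using hab.ne_top
    simpa [divTop] using div_le_div_of_nonneg_left zero_le
      (zero_le.trans_lt (WithTop.coe_lt_coe.mp hab)) (WithTop.coe_le_coe.mp hbc)

section Delta

variable {v : Valuation K Γ} {n : ℕ} {U W : Submodule K (Fin n → K)} {a b : WithTop Γ}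

lemma CondIII.deltaLE_divTop (h : CondIII v U W a b) : DeltaLE v U W (divTop a b) := by
  unfold CondIII at h
  split_ifs at h with hb
  · subst h
    exact fun u hu => ⟨u, hu, by simp⟩
  · obtain ⟨a, b, rfl, rfl, h⟩ := h
    simpa [divTop] using h

lemma condIII_of_deltaLE_divTop (ha : a ≠ ⊤)
    (hUW : Module.finrank K U = Module.finrank K W) (h : DeltaLE v U W (divTop a b)) :
    CondIII v U W a b := by
  unfold CondIII
  split_ifs with hb
  · refine Submodule.eq_of_le_of_finrank_eq (fun u hu => ?_) hUW
    obtain ⟨w, hw, huw⟩ := h u hu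
    simp only [hb, divTop, WithTop.untopD_top, div_zero, mul_zero, le_zero_iff,
      vv_eq_zero_iff, sub_eq_zero] at huw
    exact huw ▸ hw
  · lift a to Γ using ha
    lift b to Γ using hb
    exact ⟨a, b, rfl, rfl, by simpa [divTop] using h⟩

lemma deltaLE_prefixSpan {t : ℕ} {B B' : ℕ → Fin n → K} {γ : Γ} (hB : IsEchelon v t B)
    (h : ∀ k < t, vv v (B k - B' k) ≤ vv v (B k) * γ) :
    DeltaLE v (prefixSpan B t) (prefixSpan B' t) γ := by
  intro u hu
  obtain ⟨c, rfl⟩ := mem_prefixSpan_iff.mp hu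
  refine ⟨∑ k ∈ Finset.range t, c k • B' k, mem_prefixSpan_iff.mpr ⟨c, rfl⟩, ?_⟩
  rw [← Finset.sum_sub_distrib, hB.vv_sum]
  refine vv_sum_le fun k hk => ?_
  calc vv v (c k • B k - c k • B' k) = v (c k) * vv v (B k - B' k) := by
        rw [← smul_sub, vv_smul]
    _ ≤ v (c k) * vv v (B k) * γ := by
        rw [mul_assoc]
        exact mul_le_mul_right (h k (Finset.mem_range.mp hk)) _
    _ ≤ _ := mul_le_mul_left (Finset.le_sup (f := fun k => v (c k) * vv v (B k)) hk) γ

end Delta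

lemma exists_seq_of_step_down {α : Type*} {P : ℕ → α → Prop} {R : ℕ → α → α → Prop} {m : ℕ}
    (htop : ∃ a, P m a) (hstep : ∀ i < m, ∀ a, P (i + 1) a → ∃ b, P i b ∧ R i a b) :
    ∃ f : ℕ → α, (∀ i ≤ m, P i (f i)) ∧ ∀ i < m, R i (f (i + 1)) (f i) := by
  induction m generalizing P R with
  | zero =>
    obtain ⟨a, ha⟩ := htop
    exact ⟨fun _ => a, fun i hi => Nat.le_zero.mp hi ▸ ha, fun i hi => absurd hi i.not_lt_zero⟩
  | succ m ih =>
    obtain ⟨f, hf, hfR⟩ := ih (P := fun i => P (i + 1)) (R := fun i => R (i + 1)) htop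
      fun i hi a ha => hstep (i + 1) (by omega) a ha
    obtain ⟨b, hb, hbR⟩ := hstep 0 m.succ_pos (f 0) (hf 0 m.zero_le)
    refine ⟨fun i => Nat.casesOn i b f, ?_, ?_⟩
    · rintro (_ | i) hi
      exacts [hb, hf i (by omega)]
    · rintro (_ | i) hi
      exacts [hbR, hfR i (by omega)]

def level (d : ℕ → ℕ) (m k : ℕ) : ℕ :=
  Nat.findGreatest (fun j => k < d j) m

section Level

variable {d : ℕ → ℕ} {m i k : ℕ}

lemma level_le : level d m k ≤ m :=
  Nat.findGreatest_le m

lemma le_level (hi : i ≤ m) (hk : k < d i) : i ≤ level d m k :=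
  Nat.le_findGreatest hi hk

lemma level_self (hk : k < d m) : level d m k = m :=
  le_antisymm level_le (le_level le_rfl hk)

lemma level_eq (hd : AntitoneOn d (Set.Iic m)) (hi : i < m) (hk : k < d i)
    (hk' : d (i + 1) ≤ k) : level d m k = i := by
  refine le_antisymm (not_lt.mp fun hlt => ?_) (le_level hi.le hk)
  have hlev : k < d (level d m k) := Nat.findGreatest_spec (P := fun j => k < d j) hi.le hk
  have : d (level d m k) ≤ d (i + 1) := hd (Set.mem_Iic.mpr hi) (Set.mem_Iic.mpr level_le) hlt
  omega

end Level

section Straighten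

variable {v : Valuation K Γ} {n : ℕ} {d : ℕ → ℕ} {m : ℕ} {lam : ℕ → WithTop Γ}
  {W : ℕ → ℕ → Submodule K (Fin n → K)} {i : ℕ} {B : ℕ → Fin n → K}

variable (v d m W) in
def IsLevelBasis (i : ℕ) (B : ℕ → Fin n → K) : Prop :=
  IsEchelon v (d i) B ∧ ∀ k < d i, B k ∈ W i (level d m k)

lemma IsLevelBasis.prefixSpan_eq (hB : IsLevelBasis v d m W i B) (hi : i ≤ m)
    (hWdim : Module.finrank K (W i i) = d i) (hWsub : ∀ j, i ≤ j → j ≤ m → W i j ≤ W i i) :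
    prefixSpan B (d i) = W i i :=
  Submodule.eq_of_le_of_finrank_eq
    (prefixSpan_le fun k hk => hWsub _ (le_level hi hk) level_le (hB.2 k hk))
    (by rw [hB.1.finrank_prefixSpan, hWdim])

lemma exists_isLevelBasis_top (hWdim : Module.finrank K (W m m) = d m) :
    ∃ B, IsLevelBasis v d m W m B := by
  obtain ⟨B, hB, hBW, -⟩ := (isEchelon_zero (v := v) 0).exists_extend (U := W m m)
    (fun k hk => absurd hk k.not_lt_zero) (Nat.zero_le _)
  rw [hWdim] at hB hBW
  exact ⟨B, hB, fun k hk => (level_self hk).symm ▸ hBW k hk⟩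

lemma exists_isLevelBasis_step (hlam : StrictMonoOn lam (Set.Iic m))
    (hd : AntitoneOn d (Set.Iic m)) (hWdim : Module.finrank K (W i i) = d i)
    (hWsub : ∀ j, i ≤ j → j ≤ m → W i j ≤ W i i)
    (hWdelta : ∀ j, i < j → j ≤ m → CondIII v (W (i + 1) j) (W i j) (lam i) (lam j))
    (hi : i < m) (hB : IsLevelBasis v d m W (i + 1) B) :
    ∃ B', IsLevelBasis v d m W i B' ∧
      ∀ k < d (i + 1), vv v (B k - B' k) ≤ vv v (B k) * divTop (lam i) (lam (level d m k)) := by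
  have hlev : ∀ k < d (i + 1), i < level d m k := fun k hk => le_level hi hk
  have happrox : ∀ k < d (i + 1), ∃ w ∈ W i (level d m k),
      vv v (B k - w) ≤ vv v (B k) * divTop (lam i) (lam (level d m k)) := fun k hk =>
    (hWdelta _ (hlev k hk) level_le).deltaLE_divTop (B k) (hB.2 k hk)
  choose! w hwW hw using happrox
  have hwB : IsEchelon v (d (i + 1)) w := hB.1.of_vv_sub_lt fun k hk =>
    (hw k hk).trans_lt <| mul_lt_of_lt_one_right
      (zero_lt_iff.mpr (vv_eq_zero_iff.not.mpr (hB.1 k hk).1))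
      (divTop_lt_one (hlam (Set.mem_Iic.mpr hi.le) (Set.mem_Iic.mpr level_le) (hlev k hk)))
  obtain ⟨B', hB', hB'W, hB'w⟩ := hwB.exists_extend (U := W i i)
    (fun k hk => hWsub _ (hlev k hk).le level_le (hwW k hk))
    (hWdim ▸ hd (Set.mem_Iic.mpr hi.le) (Set.mem_Iic.mpr hi) i.le_succ)
  rw [hWdim] at hB' hB'W
  refine ⟨B', ⟨hB', fun k hk => ?_⟩, fun k hk => hB'w k hk ▸ hw k hk⟩
  by_cases hk' : k < d (i + 1)
  · exact hB'w k hk' ▸ hwW k hk'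
  · exact level_eq hd hi hk (not_lt.mp hk') ▸ hB'W k hk

end Straighten

/-- Here `lam k` stands for `λ_{k+1}` (`k = 0, …, m`). -/
theorem straighten_subspaces_general
    (v : Valuation K Γ) {n m : ℕ}
    (lam : ℕ → WithTop Γ)
    (hlammono : ∀ k < m, lam k < lam (k + 1))
    (d : ℕ → ℕ) (hdmono : ∀ k < m, d (k + 1) ≤ d k)
    (W : ℕ → ℕ → Submodule K (Fin n → K))
    (hWdim : ∀ i j, i ≤ j → j ≤ m → Module.finrank K (W i j) = d j)
    (hWsub : ∀ i j, i ≤ j → j ≤ m → W i j ≤ W i i)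
    (hWdelta : ∀ i j, i < j → j ≤ m → CondIII v (W (i+1) j) (W i j) (lam i) (lam j)) :
    ∃ V : ℕ → ℕ → Submodule K (Fin n → K),
      (∀ i j, i ≤ j → j ≤ m → Module.finrank K (V i j) = d j) ∧
      (∀ i j, i ≤ j → j ≤ m → V i j ≤ V i i) ∧
      (∀ i j, i < j → j ≤ m → CondIII v (V (i+1) j) (V i j) (lam i) (lam j)) ∧
      (∀ i ≤ m, V i i = W i i) ∧
      (∀ i j, i ≤ j → j + 1 ≤ m → V i (j+1) ≤ V i j) := by
  have hlam : StrictMonoOn lam (Set.Iic m) := strictMonoOn_Iic_of_lt_succ hlammono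
  have hd : AntitoneOn d (Set.Iic m) := antitoneOn_of_succ_le Set.ordConnected_Iic
    fun k _ _ hk => hdmono k (Order.succ_le_iff.mp (Set.mem_Iic.mp hk))
  have hd' : ∀ i j, i ≤ j → j ≤ m → d j ≤ d i := fun i j hij hjm =>
    hd (Set.mem_Iic.mpr (hij.trans hjm)) (Set.mem_Iic.mpr hjm) hij
  obtain ⟨B, hB, hBclose⟩ := exists_seq_of_step_down (P := IsLevelBasis v d m W)
    (R := fun i B B' => ∀ k < d (i + 1),
      vv v (B k - B' k) ≤ vv v (B k) * divTop (lam i) (lam (level d m k)))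
    (exists_isLevelBasis_top (hWdim m m le_rfl le_rfl)) fun i hi _ =>
      exists_isLevelBasis_step hlam hd (hWdim i i le_rfl hi.le) (hWsub i) (hWdelta i) hi
  have hBj : ∀ i j, i ≤ j → j ≤ m → IsEchelon v (d j) (B i) := fun i j hij hjm =>
    (hB i (hij.trans hjm)).1.mono (hd' i j hij hjm)
  refine ⟨fun i j => prefixSpan (B i) (d j), fun i j hij hjm => (hBj i j hij hjm).finrank_prefixSpan,
    fun i j hij hjm => prefixSpan_mono _ (hd' i j hij hjm), fun i j hij hjm => ?_,
    fun i hi => (hB i hi).prefixSpan_eq hi (hWdim i i le_rfl hi) (hWsub i),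
    fun i j _ hjm => prefixSpan_mono _ (hdmono j hjm)⟩
  have hij' : lam i < lam j := hlam (Set.mem_Iic.mpr (hij.le.trans hjm)) (Set.mem_Iic.mpr hjm) hij
  refine condIII_of_deltaLE_divTop hij'.ne_top
    (by rw [(hBj (i + 1) j hij hjm).finrank_prefixSpan, (hBj i j hij.le hjm).finrank_prefixSpan])
    (deltaLE_prefixSpan (hBj (i + 1) j hij hjm) fun k hk => ?_)
  refine (hBclose i (hij.trans_le hjm) k (hk.trans_le (hd' _ j hij hjm))).trans ?_
  exact mul_le_mul_right (divTop_le_divTop hij'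
    (hlam.monotoneOn (Set.mem_Iic.mpr hjm) (Set.mem_Iic.mpr level_le) (le_level hjm hk))) _

/-- one can straighten the subspaces `W i j` into a decreasing family
`V i j` with the same properties.  Here `lam k` stands for `λ_{k+1}` (`k = 0, …, m`),
so `λ₁ < ⋯ < λ_{m+1}` (with `λ_{m+1} = ∞` allowed) and `d k` stands for `d_k`. -/
theorem straighten_subspaces
    (v : Valuation K Γ) {n m : ℕ} (hm : 1 ≤ m) (hmn : m ≤ n)
    (lam : ℕ → WithTop Γ) (hlam0 : ∀ k ≤ m, lam k ≠ 0)
    (hlammono : ∀ k < m, lam k < lam (k + 1))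
    (d : ℕ → ℕ) (hd0 : d 0 ≤ n) (hdmono : ∀ k < m, d (k + 1) ≤ d k)
    (W : ℕ → ℕ → Submodule K (Fin n → K))
    (hWdim : ∀ i j, i ≤ j → j ≤ m → Module.finrank K (W i j) = d j)
    (hWsub : ∀ i j, i ≤ j → j ≤ m → W i j ≤ W i i)
    (hWdelta : ∀ i j, i < j → j ≤ m → CondIII v (W (i+1) j) (W i j) (lam i) (lam j)) :
    ∃ V : ℕ → ℕ → Submodule K (Fin n → K),
      (∀ i j, i ≤ j → j ≤ m → Module.finrank K (V i j) = d j) ∧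
      (∀ i j, i ≤ j → j ≤ m → V i j ≤ V i i) ∧
      (∀ i j, i < j → j ≤ m → CondIII v (V (i+1) j) (V i j) (lam i) (lam j)) ∧
      (∀ i ≤ m, V i i = W i i) ∧
      (∀ i j, i ≤ j → j + 1 ≤ m → V i (j+1) ≤ V i j) :=
  straighten_subspaces_general v lam hlammono d hdmono W hWdim hWsub hWdelta
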